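/- Let X be a shift space over alphabet A, k ≥ 1, and let X^(k) be the k-th higher block shift obtained via a bijection f: L_k(X) → A_k, extended to f: L_{≥k}(X) → L(X^(k)) by f(a₁⋯aₙ) = f(a₁⋯a_k)⋯f(a_{n-k+1}⋯aₙ). Then for every w ∈ L(X) with |w| ≥ k, the extension graph E₁(w, X) is isomorphic (as a bipartite graph) to E₁(f(w), X^(k)); consequently X is eventually dendric if and only if X^(k) is eventually dendric. -/

import Mathlib

/-- `L` is factorial: factors of its elements belong to it. -/
def Factorial {A : Type*} (L : Set (List A)) : Prop :=
  ∀ u v : List A, u ++ v ∈ L → u ∈ L ∧ v ∈ L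

/-- `L` is (bi)extendable: every word extends by a letter on both sides. -/
def Extendable {A : Type*} (L : Set (List A)) : Prop :=
  ∀ w ∈ L, ∃ a b : A, a :: (w ++ [b]) ∈ L

/-- number of one-letter left extensions `ℓ(w)`. -/
noncomputable def lcount {A : Type*} (L : Set (List A)) (w : List A) : ℕ :=
  Set.ncard {a : A | a :: w ∈ L}

/-- number of one-letter right extensions `r(w)`. -/
noncomputable def rcount {A : Type*} (L : Set (List A)) (w : List A) : ℕ :=
  Set.ncard {b : A | w ++ [b] ∈ L}

/-- number of one-letter bi-extensions `e(w)`. -/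
noncomputable def ecount {A : Type*} (L : Set (List A)) (w : List A) : ℕ :=
  Set.ncard {p : A × A | p.1 :: (w ++ [p.2]) ∈ L}
/-- The extension graph `E₁(w)`: bipartite graph on `L₁(w) ⊔ R₁(w)` with
edges the pairs `(a,b)` such that `awb ∈ L`. -/
def extGraph {A : Type*} (L : Set (List A)) (w : List A) :
    SimpleGraph ({a : A // a :: w ∈ L} ⊕ {b : A // w ++ [b] ∈ L}) where
  Adj x y :=
    match x, y with
    | Sum.inl a, Sum.inr b => a.1 :: (w ++ [b.1]) ∈ L
    | Sum.inr b, Sum.inl a => a.1 :: (w ++ [b.1]) ∈ L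
    | _, _ => False
  symm := by constructor; rintro (a | b) (c | d) h <;> first | exact h | exact h.elim
  loopless := by constructor; rintro (a | b) h <;> exact h.elim

/-- `L` is eventually dendric with threshold `m`. -/
def EvDendricWith {A : Type*} (L : Set (List A)) (m : ℕ) : Prop :=
  ∀ w ∈ L, m ≤ w.length → (extGraph L w).IsTree

/-- `L` is eventually dendric. -/
def EvDendric {A : Type*} (L : Set (List A)) : Prop :=
  ∃ m, EvDendricWith L m

/-- The language of a set `X ⊆ A^ℤ` of two-sided infinite words. -/
def lang {A : Type*} (X : Set (ℤ → A)) : Set (List A) :=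
  {w | ∃ x ∈ X, ∃ k : ℤ, ∀ i : Fin w.length, w.get i = x (k + (i : ℤ))}

/-- The `k`-th higher block code determined by `f` on `k`-blocks. -/
def blockCode {A B : Type*} (f : List A → B) (k : ℕ) (x : ℤ → A) : ℤ → B :=
  fun n => f (List.ofFn fun j : Fin k => x (n + (j : ℤ)))

/-- The image of a word of length `≥ k` under the extended higher block map
`f(a₁⋯aₙ) = f(a₁⋯a_k)⋯f(a_{n-k+1}⋯aₙ)`. -/
def blockWord {A B : Type*} (f : List A → B) (k : ℕ) (w : List A) : List B :=
  List.ofFn fun i : Fin (w.length - k + 1) => f ((w.drop (i : ℕ)).take k)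

/-! Because `f` is injective on `k`-blocks and a word of length `≥ k` is determined by its
`k`-blocks, the extended map `w ↦ f(w)` is injective on the words of `L(X)` of length `≥ k`, and it
maps them onto the nonempty words of `L(X⁽ᵏ⁾)`, shortening lengths by `k - 1`. Adding a letter on
either side of `w` adds one letter to `f(w)`: `f(aw) = f(a w₁⋯w_{k-1}) f(w)` and
`f(wb) = f(w) f(w_{|w|-k+2}⋯w_{|w|} b)`. So `a ↦ f(a w₁⋯w_{k-1})` and `b ↦ f(w_{|w|-k+2}⋯w_{|w|} b)`
are bijections between the one-letter extensions of `w` and of `f(w)`, and they preserve edges,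
because a word whose `k`-blocks all lie in `L(X)` lies in `L(X)` iff its image lies in `L(X⁽ᵏ⁾)`.
With the length shift, a dendricity threshold `m` for `X` gives `m + 1` for `X⁽ᵏ⁾`, and a threshold
`m` for `X⁽ᵏ⁾` gives `m + k` for `X`. -/

section Language

variable {A : Type*}

def window (x : ℤ → A) (m : ℤ) (n : ℕ) : List A :=
  List.ofFn fun i : Fin n => x (m + i)

@[simp] lemma length_window (x : ℤ → A) (m : ℤ) (n : ℕ) : (window x m n).length = n := by
  simp [window]

@[simp] lemma getElem_window (x : ℤ → A) (m : ℤ) (n i : ℕ) (h : i < (window x m n).length) :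
    (window x m n)[i] = x (m + i) := by
  simp [window]

lemma window_drop_take (x : ℤ → A) (m : ℤ) (n i j : ℕ) :
    ((window x m n).drop i).take j = window x (m + i) (min j (n - i)) := by
  refine List.ext_getElem (by simp) fun l _ _ => ?_
  simp only [List.getElem_take, List.getElem_drop, getElem_window]
  congr 1
  push_cast
  ring

lemma mem_lang_iff_exists_window {X : Set (ℤ → A)} {w : List A} :
    w ∈ lang X ↔ ∃ x ∈ X, ∃ m : ℤ, window x m w.length = w := by
  refine exists_congr fun x => and_congr_right fun _ => exists_congr fun m => ?_
  rw [eq_comm, List.ext_get_iff]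
  simp [window, Fin.forall_iff]

lemma window_mem_lang {X : Set (ℤ → A)} {x : ℤ → A} (hx : x ∈ X) (m : ℤ) (n : ℕ) :
    window x m n ∈ lang X :=
  mem_lang_iff_exists_window.2 ⟨x, hx, m, by rw [length_window]⟩

lemma drop_take_mem_lang {X : Set (ℤ → A)} {u : List A} (hu : u ∈ lang X) (i j : ℕ) :
    (u.drop i).take j ∈ lang X := by
  obtain ⟨x, hx, m, hu⟩ := mem_lang_iff_exists_window.1 hu
  rw [← hu, window_drop_take]
  exact window_mem_lang hx _ _

lemma mem_lang_of_infix {X : Set (ℤ → A)} {u v : List A} (h : v <:+: u) (hu : u ∈ lang X) :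
    v ∈ lang X := by
  obtain ⟨s, t, rfl⟩ := h
  simpa [List.append_assoc] using drop_take_mem_lang hu s.length v.length

end Language

section BlockWord

variable {A B : Type*}

@[simp] lemma length_blockWord (f : List A → B) (k : ℕ) (w : List A) :
    (blockWord f k w).length = w.length - k + 1 := by
  simp [blockWord]

@[simp] lemma getElem_blockWord (f : List A → B) (k : ℕ) (w : List A) (i : ℕ)
    (h : i < (blockWord f k w).length) :
    (blockWord f k w)[i] = f ((w.drop i).take k) := by
  simp only [blockWord, List.getElem_ofFn]

lemma blockWord_window (f : List A → B) {k n : ℕ} (x : ℤ → A) (m : ℤ) (hkn : k ≤ n) :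
    blockWord f k (window x m n) = window (blockCode f k x) m (n - k + 1) := by
  refine List.ext_getElem (by simp) fun i h _ => ?_
  have hik : min k (n - i) = k := by simp at h; omega
  rw [getElem_blockWord, window_drop_take, hik, getElem_window]
  rfl

lemma blockWord_mem_lang {X : Set (ℤ → A)} (f : List A → B) {k : ℕ} {w : List A}
    (hw : w ∈ lang X) (hkw : k ≤ w.length) :
    blockWord f k w ∈ lang (blockCode f k '' X) := by
  obtain ⟨x, hx, m, hw⟩ := mem_lang_iff_exists_window.1 hw
  rw [← hw, blockWord_window f x m hkw]
  exact window_mem_lang (Set.mem_image_of_mem _ hx) m _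

lemma exists_blockWord_eq {X : Set (ℤ → A)} {f : List A → B} {k : ℕ} {v : List B}
    (hv : v ∈ lang (blockCode f k '' X)) (hv₀ : v ≠ []) :
    ∃ u ∈ lang X, u.length = v.length + k - 1 ∧ blockWord f k u = v := by
  obtain ⟨_, ⟨x, hx, rfl⟩, m, hv⟩ := mem_lang_iff_exists_window.1 hv
  have hv₁ : 1 ≤ v.length := List.length_pos_iff.2 hv₀
  refine ⟨window x m (v.length + k - 1), window_mem_lang hx m _, length_window .., ?_⟩
  rw [blockWord_window f x m (by omega), show v.length + k - 1 - k + 1 = v.length by omega]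
  exact hv

/-- Position `j` of a word of length `≥ k` is read off the `k`-block starting at
`min j (|u| - k)`, so a word is determined by its `k`-blocks. -/
lemma eq_of_blockWord_eq {D : Set (List A)} {f : List A → B} (hf : D.InjOn f) {k : ℕ}
    (hk : 1 ≤ k) {u u' : List A} (hku : k ≤ u.length) (hku' : k ≤ u'.length)
    (hu : ∀ i ≤ u.length - k, (u.drop i).take k ∈ D)
    (hu' : ∀ i ≤ u'.length - k, (u'.drop i).take k ∈ D)
    (h : blockWord f k u = blockWord f k u') : u = u' := by
  have hlen : u.length = u'.length := by
    have := congrArg List.length h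
    simp only [length_blockWord] at this
    omega
  refine List.ext_getElem hlen fun j hj hj' => ?_
  set i := min j (u.length - k)
  have hblock : (u.drop i).take k = (u'.drop i).take k := by
    have := List.getElem_of_eq h (i := i) (by simp; omega)
    rw [getElem_blockWord, getElem_blockWord] at this
    exact hf (hu i (min_le_right ..)) (hu' i (by omega)) this
  have := List.getElem_of_eq hblock (i := j - i) (by simp; omega)
  simpa [show i + (j - i) = j by omega] using this

lemma blockWord_injOn {X : Set (ℤ → A)} {f : List A → B} {k : ℕ}
    (hf : {u | u ∈ lang X ∧ u.length = k}.InjOn f) (hk : 1 ≤ k) :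
    {u | u ∈ lang X ∧ k ≤ u.length}.InjOn (blockWord f k) :=
  fun _ ⟨hu, hku⟩ _ ⟨hu', hku'⟩ =>
    eq_of_blockWord_eq hf hk hku hku'
      (fun i hi => ⟨drop_take_mem_lang hu i k, by simp; omega⟩)
      (fun i hi => ⟨drop_take_mem_lang hu' i k, by simp; omega⟩)

lemma mem_lang_of_blockWord_mem {X : Set (ℤ → A)} {f : List A → B} {k : ℕ}
    (hf : {u | u ∈ lang X ∧ u.length = k}.InjOn f) (hk : 1 ≤ k) {u : List A}
    (hku : k ≤ u.length) (hu : ∀ i, (u.drop i).take k ∈ lang X)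
    (h : blockWord f k u ∈ lang (blockCode f k '' X)) : u ∈ lang X := by
  obtain ⟨u', hu', hlen, hu'u⟩ := exists_blockWord_eq h (by simp [← List.length_pos_iff])
  simp only [length_blockWord] at hlen
  rw [← eq_of_blockWord_eq hf hk (by omega) hku
    (fun i hi => ⟨drop_take_mem_lang hu' i k, by simp; omega⟩)
    (fun i hi => ⟨hu i, by simp; omega⟩) hu'u]
  exact hu'

lemma blockWord_cons (f : List A → B) {k : ℕ} (hk : 1 ≤ k) {w : List A} (hkw : k ≤ w.length)
    (a : A) : blockWord f k (a :: w) = f (a :: w.take (k - 1)) :: blockWord f k w := by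
  obtain ⟨k, rfl⟩ : ∃ k', k = k' + 1 := ⟨k - 1, by omega⟩
  refine List.ext_getElem (by simp; omega) fun i _ _ => ?_
  cases i with
  | zero => simp
  | succ i => simp

lemma blockWord_concat (f : List A → B) {k : ℕ} (hk : 1 ≤ k) {w : List A} (hkw : k ≤ w.length)
    (b : A) :
    blockWord f k (w ++ [b]) = blockWord f k w ++ [f (w.drop (w.length + 1 - k) ++ [b])] := by
  refine List.ext_getElem (by simp; omega) fun i h _ => ?_
  rw [getElem_blockWord]
  rcases Nat.lt_or_ge i (w.length - k + 1) with hi | hi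
  · rw [List.getElem_append_left (by simpa using hi), getElem_blockWord,
      List.drop_append_of_le_length (by omega), List.take_append_of_le_length (by simp; omega)]
  · have hlast : i = w.length + 1 - k := by simp at h; omega
    rw [List.getElem_append_right (by simpa using hi), List.drop_append_of_le_length (by omega),
      List.take_of_length_le (by simp; omega)]
    simp [hlast]

lemma blockWord_cons_concat (f : List A → B) {k : ℕ} (hk : 1 ≤ k) {w : List A}
    (hkw : k ≤ w.length) (a b : A) :
    blockWord f k (a :: (w ++ [b])) =
      f (a :: w.take (k - 1)) :: (blockWord f k w ++ [f (w.drop (w.length + 1 - k) ++ [b])]) := by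
  rw [blockWord_cons f hk (by simp; omega), blockWord_concat f hk hkw,
    List.take_append_of_le_length (by omega)]

end BlockWord

section ExtensionGraph

variable {A B : Type*}

def extGraphIsoOfEquiv {L : Set (List A)} {L' : Set (List B)} {w : List A} {w' : List B}
    (eL : {a // a :: w ∈ L} ≃ {c // c :: w' ∈ L'})
    (eR : {b // w ++ [b] ∈ L} ≃ {d // w' ++ [d] ∈ L'})
    (hadj : ∀ a b, (eL a).1 :: (w' ++ [(eR b).1]) ∈ L' ↔ a.1 :: (w ++ [b.1]) ∈ L) :
    extGraph L w ≃g extGraph L' w' where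
  toEquiv := Equiv.sumCongr eL eR
  map_rel_iff' := by
    rintro (a | b) (a' | b')
    · exact Iff.rfl
    · exact hadj a b'
    · exact hadj a' b
    · exact Iff.rfl

variable {X : Set (ℤ → A)} {f : List A → B} {k : ℕ} {w : List A}

lemma cons_take_mem_lang (hk : 1 ≤ k) {a : A} (haw : a :: w ∈ lang X) :
    a :: w.take (k - 1) ∈ lang X := by
  obtain ⟨k, rfl⟩ : ∃ k', k = k' + 1 := ⟨k - 1, by omega⟩
  simpa using drop_take_mem_lang haw 0 (k + 1)

lemma drop_concat_mem_lang {b : A} (hwb : w ++ [b] ∈ lang X) (i : ℕ) :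
    w.drop i ++ [b] ∈ lang X := by
  refine mem_lang_of_infix ⟨w.take i, [], ?_⟩ hwb
  rw [List.append_nil, ← List.append_assoc, List.take_append_drop]

lemma exists_cons_mem_lang_of_cons_blockWord_mem
    (hf : {u | u ∈ lang X ∧ u.length = k}.InjOn f) (hk : 1 ≤ k) (hw : w ∈ lang X)
    (hkw : k ≤ w.length) {c : B} (hc : c :: blockWord f k w ∈ lang (blockCode f k '' X)) :
    ∃ a, a :: w ∈ lang X ∧ f (a :: w.take (k - 1)) = c := by
  obtain ⟨u, hu, hlen, hbu⟩ := exists_blockWord_eq hc (List.cons_ne_nil _ _)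
  simp only [List.length_cons, length_blockWord] at hlen
  obtain ⟨a, t, rfl⟩ := List.exists_cons_of_ne_nil (List.ne_nil_of_length_pos (l := u) (by omega))
  have hkt : k ≤ t.length := by simp at hlen; omega
  rw [blockWord_cons f hk hkt, List.cons_eq_cons] at hbu
  obtain rfl : t = w :=
    blockWord_injOn hf hk ⟨mem_lang_of_infix (List.suffix_cons a t).isInfix hu, hkt⟩ ⟨hw, hkw⟩
      hbu.2
  exact ⟨a, hu, hbu.1⟩

lemma exists_concat_mem_lang_of_blockWord_concat_mem
    (hf : {u | u ∈ lang X ∧ u.length = k}.InjOn f) (hk : 1 ≤ k) (hw : w ∈ lang X)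
    (hkw : k ≤ w.length) {d : B} (hd : blockWord f k w ++ [d] ∈ lang (blockCode f k '' X)) :
    ∃ b, w ++ [b] ∈ lang X ∧ f (w.drop (w.length + 1 - k) ++ [b]) = d := by
  obtain ⟨u, hu, hlen, hbu⟩ := exists_blockWord_eq hd (by simp)
  simp only [List.length_append, List.length_singleton, length_blockWord] at hlen
  obtain ⟨t, b, rfl⟩ := (List.eq_nil_or_concat' u).resolve_left
    (List.ne_nil_of_length_pos (l := u) (by omega))
  have hkt : k ≤ t.length := by simp at hlen; omega
  rw [blockWord_concat f hk hkt] at hbu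
  obtain ⟨hbt, hb⟩ := List.append_inj hbu (by simp at hlen ⊢; omega)
  obtain rfl : t = w :=
    blockWord_injOn hf hk ⟨mem_lang_of_infix (List.prefix_append t [b]).isInfix hu, hkt⟩
      ⟨hw, hkw⟩ hbt
  exact ⟨b, hu, List.singleton_inj.1 hb⟩

lemma cons_concat_mem_lang_iff (hf : {u | u ∈ lang X ∧ u.length = k}.InjOn f) (hk : 1 ≤ k)
    (hkw : k ≤ w.length) {a b : A} (haw : a :: w ∈ lang X) (hwb : w ++ [b] ∈ lang X) :
    f (a :: w.take (k - 1)) :: (blockWord f k w ++ [f (w.drop (w.length + 1 - k) ++ [b])]) ∈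
        lang (blockCode f k '' X) ↔ a :: (w ++ [b]) ∈ lang X := by
  rw [← blockWord_cons_concat f hk hkw]
  refine ⟨mem_lang_of_blockWord_mem hf hk (by simp; omega) ?_,
    fun h => blockWord_mem_lang f h (by simp; omega)⟩
  rintro (_ | i)
  · rw [List.drop_zero, ← List.cons_append, List.take_append_of_le_length (by simp; omega)]
    simpa using drop_take_mem_lang haw 0 k
  · simpa using drop_take_mem_lang hwb i k

noncomputable def leftExtEquiv (hf : {u | u ∈ lang X ∧ u.length = k}.InjOn f) (hk : 1 ≤ k)
    (hw : w ∈ lang X) (hkw : k ≤ w.length) :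
    {a // a :: w ∈ lang X} ≃ {c // c :: blockWord f k w ∈ lang (blockCode f k '' X)} :=
  Equiv.ofBijective
    (fun a => ⟨f (a.1 :: w.take (k - 1)),
      blockWord_cons f hk hkw a.1 ▸ blockWord_mem_lang f a.2 (by simp; omega)⟩)
    ⟨fun a a' h => Subtype.ext (List.cons_eq_cons.1 <|
        hf ⟨cons_take_mem_lang hk a.2, by simp; omega⟩ ⟨cons_take_mem_lang hk a'.2, by simp; omega⟩
          (congrArg Subtype.val h)).1,
      fun c => by
        obtain ⟨a, ha, hac⟩ := exists_cons_mem_lang_of_cons_blockWord_mem hf hk hw hkw c.2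
        exact ⟨⟨a, ha⟩, Subtype.ext hac⟩⟩

noncomputable def rightExtEquiv (hf : {u | u ∈ lang X ∧ u.length = k}.InjOn f) (hk : 1 ≤ k)
    (hw : w ∈ lang X) (hkw : k ≤ w.length) :
    {b // w ++ [b] ∈ lang X} ≃ {d // blockWord f k w ++ [d] ∈ lang (blockCode f k '' X)} :=
  Equiv.ofBijective
    (fun b => ⟨f (w.drop (w.length + 1 - k) ++ [b.1]),
      blockWord_concat f hk hkw b.1 ▸ blockWord_mem_lang f b.2 (by simp; omega)⟩)
    ⟨fun b b' h => Subtype.ext (List.singleton_inj.1 (List.append_cancel_left <|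
        hf ⟨drop_concat_mem_lang b.2 _, by simp; omega⟩
          ⟨drop_concat_mem_lang b'.2 _, by simp; omega⟩ (congrArg Subtype.val h))),
      fun d => by
        obtain ⟨b, hb, hbd⟩ := exists_concat_mem_lang_of_blockWord_concat_mem hf hk hw hkw d.2
        exact ⟨⟨b, hb⟩, Subtype.ext hbd⟩⟩

noncomputable def extGraphBlockWordIso (hf : {u | u ∈ lang X ∧ u.length = k}.InjOn f) (hk : 1 ≤ k)
    (hw : w ∈ lang X) (hkw : k ≤ w.length) :
    extGraph (lang X) w ≃g extGraph (lang (blockCode f k '' X)) (blockWord f k w) :=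
  extGraphIsoOfEquiv (leftExtEquiv hf hk hw hkw) (rightExtEquiv hf hk hw hkw)
    fun a b => cons_concat_mem_lang_iff hf hk hkw a.2 b.2

end ExtensionGraph

section EventuallyDendric

variable {A B : Type*} {X : Set (ℤ → A)} {f : List A → B} {k m : ℕ}

lemma EvDendricWith.image_blockCode (hf : {u | u ∈ lang X ∧ u.length = k}.InjOn f) (hk : 1 ≤ k)
    (h : EvDendricWith (lang X) m) : EvDendricWith (lang (blockCode f k '' X)) (m + 1) := by
  intro v hv hmv
  obtain ⟨u, hu, hlen, rfl⟩ := exists_blockWord_eq hv (List.ne_nil_of_length_pos (by omega))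
  exact (extGraphBlockWordIso hf hk hu (by omega)).isTree_iff.1 (h u hu (by omega))

lemma EvDendricWith.of_image_blockCode (hf : {u | u ∈ lang X ∧ u.length = k}.InjOn f) (hk : 1 ≤ k)
    (h : EvDendricWith (lang (blockCode f k '' X)) m) : EvDendricWith (lang X) (m + k) := by
  intro w hw hmw
  exact (extGraphBlockWordIso hf hk hw (by omega)).isTree_iff.2
    (h _ (blockWord_mem_lang f hw (by omega)) (by simp; omega))

end EventuallyDendric

theorem stmt19_general {A B : Type*}
    (X : Set (ℤ → A))
    (k : ℕ) (hk : 1 ≤ k) (f : List A → B)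
    (hf : Set.BijOn f {w : List A | w ∈ lang X ∧ w.length = k} Set.univ) :
    (∀ w ∈ lang X, k ≤ w.length →
      Nonempty (extGraph (lang X) w ≃g
        extGraph (lang (blockCode f k '' X)) (blockWord f k w))) ∧
    (EvDendric (lang X) ↔ EvDendric (lang (blockCode f k '' X))) := by
  have hinj := hf.injOn
  refine ⟨fun w hw hkw => ⟨extGraphBlockWordIso hinj hk hw hkw⟩, ?_, ?_⟩
  · rintro ⟨m, hm⟩
    exact ⟨m + 1, EvDendricWith.image_blockCode hinj hk hm⟩
  · rintro ⟨m, hm⟩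
    exact ⟨m + k, EvDendricWith.of_image_blockCode hinj hk hm⟩

/-- For the `k`-th higher block shift `X⁽ᵏ⁾ = γ_k(X)`, the extension graph of
any `w ∈ L(X)` of length `≥ k` is isomorphic to that of `f(w)` in `X⁽ᵏ⁾`;
consequently `X` is eventually dendric iff `X⁽ᵏ⁾` is. -/
theorem stmt19 {A B : Type*} [Fintype A] [Fintype B]
    (X : Set (ℤ → A)) (hshift : ∀ x : ℤ → A, x ∈ X ↔ (fun n => x (n + 1)) ∈ X)
    (k : ℕ) (hk : 1 ≤ k) (f : List A → B)
    (hf : Set.BijOn f {w : List A | w ∈ lang X ∧ w.length = k} Set.univ) :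
    (∀ w ∈ lang X, k ≤ w.length →
      Nonempty (extGraph (lang X) w ≃g
        extGraph (lang (blockCode f k '' X)) (blockWord f k w))) ∧
    (EvDendric (lang X) ↔ EvDendric (lang (blockCode f k '' X))) :=
  stmt19_general X k hk f hf
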